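/- Let M, N be positive natural numbers and let d be a dataset of N instances with M binary protected attributes, where each instance carries both a true binary label and a predicted binary label. For a hypercube x, define the true positive rate TPR(x) = (number of instances in x with true label true and predicted label true)/(number of instances in x with true label true). Suppose every vertex (level-0 hypercube) contains at least one instance whose true label is true. Then the minimum of TPR over level-K hypercubes is monotonically increasing in K and the maximum of TPR over level-K hypercubes is monotonically decreasing in K: for every K with 1 ≤ K ≤ M, min over level K-1 of TPR ≤ min over level K of TPR, and max over level K of TPR ≤ max over level K-1 of TPR. -/

import Mathlib

/-- An attribute vector `v` belongs to the hypercube `x` if it matches all specified coordinates. -/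
def Belongs {M : ℕ} (x : Fin M → Option Bool) (v : Fin M → Bool) : Prop :=
  ∀ i : Fin M, ∀ b : Bool, x i = some b → v i = b

instance {M : ℕ} (x : Fin M → Option Bool) (v : Fin M → Bool) : Decidable (Belongs x v) := by
  unfold Belongs; infer_instance

/-- The level of a hypercube: the number of its stars (unspecified coordinates). -/
def level {M : ℕ} (x : Fin M → Option Bool) : ℕ :=
  (Finset.univ.filter fun i => x i = none).card

/-- The finset of all hypercubes of level `K`. -/
def levelSet (M K : ℕ) : Finset (Fin M → Option Bool) :=
  Finset.univ.filter fun x => level x = K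

/-- N(x): the number of instances of the dataset `d` (with true and predicted labels)
whose attribute vector belongs to `x`. -/
def cnt {M N : ℕ} (d : Fin N → (Fin M → Bool) × Bool × Bool) (x : Fin M → Option Bool) : ℕ :=
  (Finset.univ.filter fun n => Belongs x (d n).1).card

/-- The number of instances in `x` with true label `true`. -/
def cntT {M N : ℕ} (d : Fin N → (Fin M → Bool) × Bool × Bool) (x : Fin M → Option Bool) : ℕ :=
  (Finset.univ.filter fun n => Belongs x (d n).1 ∧ (d n).2.1 = true).card

/-- The number of true positives in `x` (true label and predicted label both true). -/
def cntTP {M N : ℕ} (d : Fin N → (Fin M → Bool) × Bool × Bool) (x : Fin M → Option Bool) : ℕ :=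
  (Finset.univ.filter fun n =>
    Belongs x (d n).1 ∧ (d n).2.1 = true ∧ (d n).2.2 = true).card

/-- The true positive rate of hypercube `x`. -/
def TPR {M N : ℕ} (d : Fin N → (Fin M → Bool) × Bool × Bool) (x : Fin M → Option Bool) : ℚ :=
  (cntTP d x : ℚ) / (cntT d x : ℚ)

/-- Minimum true positive rate over all hypercubes of level `K`
(the level set is nonempty whenever `K ≤ M`, so the junk value `0` is never used there). -/
def TPRMin {M N : ℕ} (d : Fin N → (Fin M → Bool) × Bool × Bool) (K : ℕ) : ℚ :=
  (((levelSet M K).image (TPR d)).min).untopD 0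

/-- Maximum true positive rate over all hypercubes of level `K`. -/
def TPRMax {M N : ℕ} (d : Fin N → (Fin M → Bool) × Bool × Bool) (K : ℕ) : ℚ :=
  (((levelSet M K).image (TPR d)).max).unbotD 0

/-!
Fixing a star of a hypercube `x` to `true` or to `false` splits the instances of `x` between two
hypercubes one level lower, so `TPR x` is the mediant of the rates of these two children. When all
denominators are positive (every hypercube contains a vertex), a mediant lies between the two
fractions; hence every hypercube of level `K` has a child of level `K - 1` with a rate at most its
own, and one with a rate at least its own.
-/

open Finset Function

section Mediant

variable {α : Type*} [Field α] [LinearOrder α] [IsStrictOrderedRing α] {a b c d : α}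

theorem min_div_le_add_div_add (hb : 0 < b) (hd : 0 < d) :
    min (a / b) (c / d) ≤ (a + c) / (b + d) := by
  rw [le_div_iff₀ (add_pos hb hd), mul_add]
  exact add_le_add ((le_div_iff₀ hb).1 (min_le_left _ _))
    ((le_div_iff₀ hd).1 (min_le_right _ _))

theorem add_div_add_le_max_div (hb : 0 < b) (hd : 0 < d) :
    (a + c) / (b + d) ≤ max (a / b) (c / d) := by
  rw [div_le_iff₀ (add_pos hb hd), mul_add]
  exact add_le_add ((div_le_iff₀ hb).1 (le_max_left _ _))
    ((div_le_iff₀ hd).1 (le_max_right _ _))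

end Mediant

section Finset

variable {α β : Type*} [LinearOrder β] {s t : Finset α} {f : α → β}

theorem untopD_min_image_le_of_forall_exists_le (c : β) (ht : t.Nonempty)
    (h : ∀ x ∈ t, ∃ y ∈ s, f y ≤ f x) :
    (s.image f).min.untopD c ≤ (t.image f).min.untopD c := by
  obtain ⟨y, hy, -⟩ := h _ ht.choose_spec
  rw [← coe_min' (Nonempty.image ⟨y, hy⟩ f), ← coe_min' (ht.image f), WithTop.untopD_coe,
    WithTop.untopD_coe]
  refine le_min' _ _ _ fun z hz => ?_
  obtain ⟨x, hx, rfl⟩ := mem_image.1 hz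
  obtain ⟨y, hy, hyx⟩ := h x hx
  exact (min'_le _ _ (mem_image_of_mem f hy)).trans hyx

theorem unbotD_max_image_le_of_forall_exists_le (c : β) (ht : t.Nonempty)
    (h : ∀ x ∈ t, ∃ y ∈ s, f x ≤ f y) :
    (t.image f).max.unbotD c ≤ (s.image f).max.unbotD c :=
  untopD_min_image_le_of_forall_exists_le (β := βᵒᵈ) c ht h

end Finset

section Hypercube

variable {M : ℕ}

theorem belongs_update_some_iff {x : Fin M → Option Bool} {i : Fin M} (hx : x i = none)
    (b : Bool) (v : Fin M → Bool) :
    Belongs (update x i (some b)) v ↔ Belongs x v ∧ v i = b := by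
  refine ⟨fun h => ⟨fun j c hj => h j c ?_, h i b (update_self ..)⟩,
    fun ⟨h, hi⟩ j c hj => ?_⟩
  · rwa [update_of_ne (by rintro rfl; simp [hx] at hj)]
  · rcases eq_or_ne j i with rfl | hji
    · simpa [hi] using hj
    · exact h j c (by rwa [update_of_ne hji] at hj)

theorem belongs_vertex_iff (v w : Fin M → Bool) : Belongs (fun i => some (v i)) w ↔ w = v := by
  simp [Belongs, funext_iff]

theorem belongs_getD (x : Fin M → Option Bool) (b : Bool) :
    Belongs x fun i => (x i).getD b := by
  intro i c hi
  simp [hi]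

theorem mem_levelSet {x : Fin M → Option Bool} {K : ℕ} :
    x ∈ levelSet M K ↔ level x = K := by
  simp [levelSet]

theorem levelSet_nonempty {K : ℕ} (hK : K ≤ M) : (levelSet M K).Nonempty := by
  refine ⟨fun i => if (i : ℕ) < K then none else some true, mem_levelSet.2 ?_⟩
  simp [level, Fin.card_filter_val_lt, hK]

theorem exists_eq_none_of_mem_levelSet_succ {x : Fin M → Option Bool} {k : ℕ}
    (hx : x ∈ levelSet M (k + 1)) : ∃ i, x i = none := by
  rw [mem_levelSet, level] at hx
  simpa [filter_nonempty_iff] using card_pos.1 (hx ▸ k.succ_pos : 0 < #{i | x i = none})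

theorem level_update_some {x : Fin M → Option Bool} {i : Fin M} (hx : x i = none) (b : Bool) :
    level (update x i (some b)) = level x - 1 := by
  have : ({j | update x i (some b) j = none} : Finset (Fin M))
      = ({j | x j = none} : Finset _).erase i := by
    ext j
    rcases eq_or_ne j i with rfl | hji <;> simp [*]
  rw [level, level, this, card_erase_of_mem (by simpa using hx)]

theorem update_mem_levelSet {x : Fin M → Option Bool} {k : ℕ} (hx : x ∈ levelSet M (k + 1))
    {i : Fin M} (hi : x i = none) (b : Bool) : update x i (some b) ∈ levelSet M k := by
  rw [mem_levelSet] at hx ⊢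
  rw [level_update_some hi, hx, Nat.add_sub_cancel]

end Hypercube

section Counts

variable {M N : ℕ} (d : Fin N → (Fin M → Bool) × Bool × Bool) {x : Fin M → Option Bool}
  {i : Fin M}

theorem card_filter_belongs_eq_add {ι : Type*} [Fintype ι] (v : ι → Fin M → Bool)
    (p : ι → Prop) [DecidablePred p] (hx : x i = none) :
    #{n | Belongs x (v n) ∧ p n} = #{n | Belongs (update x i (some true)) (v n) ∧ p n}
      + #{n | Belongs (update x i (some false)) (v n) ∧ p n} := by
  rw [← card_filter_add_card_filter_not (s := {n | Belongs x (v n) ∧ p n})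
    (fun n => v n i = true), filter_filter, filter_filter]
  simp only [belongs_update_some_iff hx, Bool.not_eq_true]
  congr 2 <;> ext n <;> simp [and_right_comm]

theorem cntT_eq_add (hx : x i = none) :
    cntT d x = cntT d (update x i (some true)) + cntT d (update x i (some false)) :=
  card_filter_belongs_eq_add (fun n => (d n).1) (fun n => (d n).2.1 = true) hx

theorem cntTP_eq_add (hx : x i = none) :
    cntTP d x = cntTP d (update x i (some true)) + cntTP d (update x i (some false)) :=
  card_filter_belongs_eq_add (fun n => (d n).1)
    (fun n => (d n).2.1 = true ∧ (d n).2.2 = true) hx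

theorem cntT_vertex_le {v : Fin M → Bool} (hv : Belongs x v) :
    cntT d (fun i => some (v i)) ≤ cntT d x :=
  card_le_card fun n hn => by
    simp only [mem_filter, mem_univ, true_and, belongs_vertex_iff] at hn ⊢
    exact ⟨hn.1 ▸ hv, hn.2⟩

theorem cntT_pos (hvert : ∀ v : Fin M → Bool, 0 < cntT d (fun i => some (v i)))
    (x : Fin M → Option Bool) : 0 < cntT d x :=
  (hvert _).trans_le (cntT_vertex_le d (belongs_getD x true))

end Counts

section Rates

variable {M N : ℕ} {d : Fin N → (Fin M → Bool) × Bool × Bool} {x : Fin M → Option Bool}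
  {i : Fin M}

theorem TPR_eq_mediant (hx : x i = none) :
    TPR d x = (cntTP d (update x i (some true)) + cntTP d (update x i (some false)) : ℚ)
      / (cntT d (update x i (some true)) + cntT d (update x i (some false))) := by
  rw [TPR, cntTP_eq_add d hx, cntT_eq_add d hx, Nat.cast_add, Nat.cast_add]

theorem exists_TPR_update_le (htrue : 0 < cntT d (update x i (some true)))
    (hfalse : 0 < cntT d (update x i (some false))) (hx : x i = none) :
    ∃ b, TPR d (update x i (some b)) ≤ TPR d x := by
  have h := min_div_le_add_div_add (a := (cntTP d (update x i (some true)) : ℚ))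
    (c := (cntTP d (update x i (some false)) : ℚ)) (Nat.cast_pos.2 htrue) (Nat.cast_pos.2 hfalse)
  rw [← TPR_eq_mediant hx] at h
  rcases min_le_iff.1 h with h | h
  exacts [⟨true, h⟩, ⟨false, h⟩]

theorem exists_le_TPR_update (htrue : 0 < cntT d (update x i (some true)))
    (hfalse : 0 < cntT d (update x i (some false))) (hx : x i = none) :
    ∃ b, TPR d x ≤ TPR d (update x i (some b)) := by
  have h := add_div_add_le_max_div (a := (cntTP d (update x i (some true)) : ℚ))
    (c := (cntTP d (update x i (some false)) : ℚ)) (Nat.cast_pos.2 htrue) (Nat.cast_pos.2 hfalse)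
  rw [← TPR_eq_mediant hx] at h
  rcases le_max_iff.1 h with h | h
  exacts [⟨true, h⟩, ⟨false, h⟩]

end Rates

theorem TPR_min_max_mono_general (M N : ℕ)
    (d : Fin N → (Fin M → Bool) × Bool × Bool)
    (hvert : ∀ v : Fin M → Bool, 0 < cntT d (fun i => some (v i)))
    (K : ℕ) (hKM : K ≤ M) :
    TPRMin d (K - 1) ≤ TPRMin d K ∧ TPRMax d K ≤ TPRMax d (K - 1) := by
  obtain _ | k := K
  · exact ⟨le_rfl, le_rfl⟩
  have hpos := cntT_pos d hvert
  rw [Nat.add_sub_cancel]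
  constructor
  · refine untopD_min_image_le_of_forall_exists_le 0 (levelSet_nonempty hKM) fun x hx => ?_
    obtain ⟨i, hi⟩ := exists_eq_none_of_mem_levelSet_succ hx
    obtain ⟨b, hb⟩ := exists_TPR_update_le (hpos _) (hpos _) hi
    exact ⟨_, update_mem_levelSet hx hi b, hb⟩
  · refine unbotD_max_image_le_of_forall_exists_le 0 (levelSet_nonempty hKM) fun x hx => ?_
    obtain ⟨i, hi⟩ := exists_eq_none_of_mem_levelSet_succ hx
    obtain ⟨b, hb⟩ := exists_le_TPR_update (hpos _) (hpos _) hi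
    exact ⟨_, update_mem_levelSet hx hi b, hb⟩

/-- If every vertex contains at least one instance whose true label is true,
the minimum TPR per level is monotonically increasing and the maximum TPR per level is
monotonically decreasing in the level. -/
theorem TPR_min_max_mono (M N : ℕ) (hM : 0 < M) (hN : 0 < N)
    (d : Fin N → (Fin M → Bool) × Bool × Bool)
    (hvert : ∀ v : Fin M → Bool, 0 < cntT d (fun i => some (v i)))
    (K : ℕ) (hK1 : 1 ≤ K) (hKM : K ≤ M) :
    TPRMin d (K - 1) ≤ TPRMin d K ∧ TPRMax d K ≤ TPRMax d (K - 1) :=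
  TPR_min_max_mono_general M N d hvert K hKM
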